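/- (De Giorgi-type counter-example: sharp integrability.) Let ξ ≠ 0 be a real number, set ε = |ξ|/√(4 + ξ²), and define u : ℝ² \ {0} → ℝ² by u(x) = (|x|^ε − |x|^{−ε}) x/|x|. Then u vanishes on the unit circle {x : |x| = 1}, and for every q ∈ (1, ∞) one has ∫_{\{|x| > 1\}} |∇u(x)|^q dx < ∞ if and only if q > 2/(1 − ε). In particular ∇u is not square-integrable on {x : |x| > 1}. -/

import Mathlib

open MeasureTheory Metric Set
open scoped ENNReal

noncomputable section

abbrev V2 := EuclideanSpace ℝ (Fin 2)
abbrev Mat2 := Matrix (Fin 2) (Fin 2) ℝ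

/-- Frobenius inner product of 2×2 matrices. -/
def frobInner (A B : Mat2) : ℝ := ∑ i, ∑ j, A i j * B i j

/-- Square of the Frobenius norm. -/
def frobNormSq (A : Mat2) : ℝ := ∑ i, ∑ j, (A i j) ^ 2

/-- Frobenius norm. -/
def frobNorm (A : Mat2) : ℝ := Real.sqrt (frobNormSq A)

/-- Gradient matrix of a map `u : ℝ² → ℝ²`: `(grad u x) i j = ∂_{x_j} u_i (x)`. -/
def grad (u : V2 → V2) (x : V2) : Mat2 :=
  Matrix.of fun i j => fderiv ℝ u x (EuclideanSpace.single j 1) i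

/-- The explicit radial field `u(x) = (|x|^ε - |x|^{-ε}) x/|x|` with
`ε = |ξ|/√(4 + ξ²)`. -/
def deGiorgiField (ξ : ℝ) (x : V2) : V2 :=
  (‖x‖ ^ (|ξ| / Real.sqrt (4 + ξ ^ 2)) -
    ‖x‖ ^ (-(|ξ| / Real.sqrt (4 + ξ ^ 2)))) • (‖x‖⁻¹ • x)

/-! With `φ(r) = r^ε - r^(-ε)` the field is `u(x) = φ(|x|) x/|x|`, whose gradient has eigenvalue
`φ(r)/r` in the tangential direction and `φ'(r)` in the radial one. Hence
`|∇u|² = (r^(ε-1) - r^(-ε-1))² + ε² (r^(ε-1) + r^(-ε-1))²`, which for `r ≥ 1` is comparable to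
`r^(2(ε-1))`. In polar coordinates `|∇u|^q` is then integrable outside the unit disk iff
`∫_1^∞ r^(1 + (ε-1)q) dr < ∞`, i.e. iff `(ε-1)q < -2`. -/

theorem integrable_iff_of_norm_le_mul {α β γ : Type*} [MeasurableSpace α] {μ : Measure α}
    [NormedAddCommGroup β] [NormedAddCommGroup γ] {f : α → β} {g : α → γ} {a b : ℝ}
    (hf : AEStronglyMeasurable f μ) (hg : AEStronglyMeasurable g μ)
    (hfg : ∀ᵐ x ∂μ, ‖f x‖ ≤ a * ‖g x‖) (hgf : ∀ᵐ x ∂μ, ‖g x‖ ≤ b * ‖f x‖) :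
    Integrable f μ ↔ Integrable g μ :=
  ⟨fun h => (h.norm.const_mul b).mono' hg hgf, fun h => (h.norm.const_mul a).mono' hf hfg⟩

section Polar

variable {E F : Type*} [NormedAddCommGroup E] [NormedSpace ℝ E] [Nontrivial E]
  [FiniteDimensional ℝ E] [MeasurableSpace E] [BorelSpace E] (μ : Measure E) [μ.IsAddHaarMeasure]
  [NormedAddCommGroup F] [NormedSpace ℝ F]

theorem integrableOn_setOf_lt_norm_fun_norm_addHaar {f : ℝ → F} {r : ℝ} (hr : 0 ≤ r) :
    IntegrableOn (fun x : E => f ‖x‖) {x | r < ‖x‖} μ ↔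
      IntegrableOn (fun y => y ^ (Module.finrank ℝ E - 1) • f y) (Ioi r) := by
  have hS : MeasurableSet {x : E | r < ‖x‖} := measurableSet_lt measurable_const measurable_norm
  rw [← integrable_indicator_iff hS]
  have : {x : E | r < ‖x‖}.indicator (fun x => f ‖x‖) = fun x => (Ioi r).indicator f ‖x‖ := by
    ext x; simp [indicator]
  rw [this, integrable_fun_norm_addHaar μ,
    ← funext (indicator_smul_apply (Ioi r) (fun y : ℝ => y ^ (Module.finrank ℝ E - 1)) f),
    integrableOn_indicator_iff measurableSet_Ioi, Ioi_inter_Ioi, max_eq_left hr]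

theorem integrableOn_setOf_lt_norm_rpow_iff {r : ℝ} (hr : 0 < r) {s : ℝ} :
    IntegrableOn (fun x : E => ‖x‖ ^ s) {x | r < ‖x‖} μ ↔ s < -Module.finrank ℝ E := by
  rw [integrableOn_setOf_lt_norm_fun_norm_addHaar μ hr.le (f := fun y => y ^ s)]
  have hd : 1 ≤ Module.finrank ℝ E := Module.finrank_pos
  rw [integrableOn_congr_fun (g := fun y : ℝ => y ^ (s + (Module.finrank ℝ E - 1 : ℕ)))
    (fun y hy => ?_) measurableSet_Ioi, integrableOn_Ioi_rpow_iff hr]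
  · push_cast [hd]
    constructor <;> intro h <;> linarith
  · dsimp only
    rw [smul_eq_mul, Real.rpow_add (hr.trans (mem_Ioi.mp hy)), Real.rpow_natCast, mul_comm]

end Polar

theorem measurable_frobNorm_grad (u : V2 → V2) : Measurable fun x => frobNorm (grad u x) := by
  have hentry (i j : Fin 2) : Measurable fun x => grad u x i j :=
    (EuclideanSpace.proj (𝕜 := ℝ) i).measurable.comp
      (measurable_fderiv_apply_const ℝ u (EuclideanSpace.single j 1))
  unfold frobNorm frobNormSq
  fun_prop

theorem hasFDerivAt_smul_norm_sq {E : Type*} [NormedAddCommGroup E] [InnerProductSpace ℝ E]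
    {g : ℝ → ℝ} {g' : ℝ} {x : E} (hg : HasDerivAt g g' (‖x‖ ^ 2)) :
    HasFDerivAt (fun y => g (‖y‖ ^ 2) • y)
      (g (‖x‖ ^ 2) • ContinuousLinearMap.id ℝ E + (2 * g') • (innerSL ℝ x).smulRight x) x := by
  have hnorm : HasFDerivAt (fun y : E => ‖y‖ ^ 2) (2 • innerSL ℝ x) x := by
    simpa using (hasFDerivAt_id x).norm_sq
  refine ((hg.comp_hasFDerivAt x hnorm).smul (hasFDerivAt_id (𝕜 := ℝ) x)).congr_fderiv ?_
  rw [ContinuousLinearMap.ext_iff]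
  intro y
  simp [mul_smul, smul_comm g' (2 : ℕ)]

theorem grad_smul_norm_sq_apply {g : ℝ → ℝ} {g' : ℝ} {x : V2} (hg : HasDerivAt g g' (‖x‖ ^ 2))
    (i j : Fin 2) :
    grad (fun y => g (‖y‖ ^ 2) • y) x i j =
      g (‖x‖ ^ 2) * (if i = j then 1 else 0) + 2 * g' * x j * x i := by
  simp [grad, (hasFDerivAt_smul_norm_sq hg).fderiv, EuclideanSpace.inner_single_right, mul_assoc]

theorem frobNormSq_grad_smul_norm_sq {g : ℝ → ℝ} {g' : ℝ} {x : V2}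
    (hg : HasDerivAt g g' (‖x‖ ^ 2)) :
    frobNormSq (grad (fun y => g (‖y‖ ^ 2) • y) x) =
      g (‖x‖ ^ 2) ^ 2 + (g (‖x‖ ^ 2) + 2 * ‖x‖ ^ 2 * g') ^ 2 := by
  have hnorm : ‖x‖ ^ 2 = x 0 ^ 2 + x 1 ^ 2 := by
    simp [EuclideanSpace.norm_sq_eq, Fin.sum_univ_two]
  simp only [frobNormSq, Fin.sum_univ_two, grad_smul_norm_sq_apply hg, if_true,
    Fin.isValue, Fin.reduceEq, if_false]
  rw [hnorm]
  ring

-- Parametrising by `|x|²` instead of `|x|` lets the chain rule run through the smooth `‖·‖²`.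
def deGiorgiProfile (ε s : ℝ) : ℝ := s ^ ((ε - 1) / 2) - s ^ ((-ε - 1) / 2)

theorem deGiorgiProfile_sq {ε r : ℝ} (hr : 0 ≤ r) :
    deGiorgiProfile ε (r ^ 2) = r ^ (ε - 1) - r ^ (-ε - 1) := by
  simp only [deGiorgiProfile, Real.rpow_div_two_eq_sqrt _ (sq_nonneg r), Real.sqrt_sq hr]

theorem deGiorgiField_eq_smul (ξ : ℝ) :
    deGiorgiField ξ = fun x => deGiorgiProfile (|ξ| / Real.sqrt (4 + ξ ^ 2)) (‖x‖ ^ 2) • x := by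
  funext x
  rcases eq_or_ne x 0 with rfl | hx
  · simp [deGiorgiField]
  have hr : 0 < ‖x‖ := norm_pos_iff.mpr hx
  rw [deGiorgiField, deGiorgiProfile_sq hr.le, smul_smul, sub_mul,
    ← Real.rpow_neg_one, ← Real.rpow_add hr, ← Real.rpow_add hr]
  ring_nf

theorem hasDerivAt_deGiorgiProfile (ε : ℝ) {s : ℝ} (hs : 0 < s) :
    HasDerivAt (deGiorgiProfile ε)
      ((ε - 1) / 2 * s ^ ((ε - 1) / 2 - 1) - (-ε - 1) / 2 * s ^ ((-ε - 1) / 2 - 1)) s :=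
  (Real.hasDerivAt_rpow_const (Or.inl hs.ne')).sub (Real.hasDerivAt_rpow_const (Or.inl hs.ne'))

theorem frobNormSq_grad_deGiorgi (ε : ℝ) {x : V2} (hx : x ≠ 0) :
    frobNormSq (grad (fun y => deGiorgiProfile ε (‖y‖ ^ 2) • y) x) =
      (‖x‖ ^ (ε - 1) - ‖x‖ ^ (-ε - 1)) ^ 2 + (ε * (‖x‖ ^ (ε - 1) + ‖x‖ ^ (-ε - 1))) ^ 2 := by
  have hr : 0 < ‖x‖ := norm_pos_iff.mpr hx
  rw [frobNormSq_grad_smul_norm_sq (hasDerivAt_deGiorgiProfile ε (by positivity)),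
    deGiorgiProfile_sq hr.le]
  simp only [Real.rpow_sub_one (pow_pos hr 2).ne', Real.rpow_div_two_eq_sqrt _ (sq_nonneg _),
    Real.sqrt_sq hr.le]
  field_simp
  ring

theorem frobNorm_grad_deGiorgi_bounds {ε : ℝ} (hε0 : 0 ≤ ε) (hε1 : ε ≤ 1) {x : V2}
    (hx : 1 ≤ ‖x‖) :
    ε * ‖x‖ ^ (ε - 1) ≤ frobNorm (grad (fun y => deGiorgiProfile ε (‖y‖ ^ 2) • y) x) ∧
      frobNorm (grad (fun y => deGiorgiProfile ε (‖y‖ ^ 2) • y) x) ≤ 3 * ‖x‖ ^ (ε - 1) := by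
  have hx0 : x ≠ 0 := norm_pos_iff.mp (by linarith)
  rw [frobNorm, frobNormSq_grad_deGiorgi ε hx0]
  set A := ‖x‖ ^ (ε - 1)
  set B := ‖x‖ ^ (-ε - 1)
  have hB : 0 ≤ B := by positivity
  have hBA : B ≤ A := Real.rpow_le_rpow_of_exponent_le hx (by linarith)
  constructor
  · have h : (ε * A) ^ 2 ≤ (ε * (A + B)) ^ 2 := by gcongr; linarith
    exact Real.le_sqrt_of_sq_le (by nlinarith [sq_nonneg (A - B)])
  · have h₁ : (A - B) ^ 2 ≤ A ^ 2 := by nlinarith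
    have h₂ : (ε * (A + B)) ^ 2 ≤ (2 * A) ^ 2 :=
      pow_le_pow_left₀ (by positivity) (by nlinarith [mul_le_mul_of_nonneg_left hBA hε0]) 2
    exact Real.sqrt_le_iff.mpr ⟨by positivity, by nlinarith⟩

theorem lintegral_frobNorm_grad_deGiorgi_lt_top_iff {ε q : ℝ} (hε0 : 0 < ε) (hε1 : ε < 1)
    (hq : 0 < q) :
    (∫⁻ x in {x : V2 | 1 < ‖x‖},
        ENNReal.ofReal (frobNorm (grad (fun y => deGiorgiProfile ε (‖y‖ ^ 2) • y) x) ^ q)) < ⊤ ↔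
      2 / (1 - ε) < q := by
  set G := fun x => frobNorm (grad (fun y => deGiorgiProfile ε (‖y‖ ^ 2) • y) x) ^ q
  have hS : MeasurableSet {x : V2 | 1 < ‖x‖} := measurableSet_lt measurable_const measurable_norm
  have hG_meas : Measurable G := (measurable_frobNorm_grad _).pow_const q
  have hG_nonneg (x : V2) : 0 ≤ G x := Real.rpow_nonneg (Real.sqrt_nonneg _) q
  have hG_bounds (x : V2) (hx : 1 < ‖x‖) :
      ε ^ q * ‖x‖ ^ ((ε - 1) * q) ≤ G x ∧ G x ≤ 3 ^ q * ‖x‖ ^ ((ε - 1) * q) := by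
    obtain ⟨hlow, hup⟩ := frobNorm_grad_deGiorgi_bounds hε0.le hε1.le hx.le
    have hA : 0 ≤ ‖x‖ ^ (ε - 1) := by positivity
    rw [Real.rpow_mul (norm_nonneg x), ← Real.mul_rpow hε0.le hA, ← Real.mul_rpow (by norm_num) hA]
    exact ⟨Real.rpow_le_rpow (by positivity) hlow hq.le,
      Real.rpow_le_rpow (Real.sqrt_nonneg _) hup hq.le⟩
  rw [lt_top_iff_ne_top,
    lintegral_ofReal_ne_top_iff_integrable hG_meas.aestronglyMeasurable (.of_forall hG_nonneg)]
  calc Integrable G (volume.restrict {x : V2 | 1 < ‖x‖})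
      ↔ Integrable (fun x : V2 => ‖x‖ ^ ((ε - 1) * q)) (volume.restrict {x | 1 < ‖x‖}) := by
        refine integrable_iff_of_norm_le_mul (a := 3 ^ q) (b := (ε ^ q)⁻¹)
          hG_meas.aestronglyMeasurable (measurable_norm.pow_const _).aestronglyMeasurable
          (ae_restrict_of_forall_mem hS fun x hx => ?_)
          (ae_restrict_of_forall_mem hS fun x hx => ?_)
        · rw [Real.norm_of_nonneg (hG_nonneg x), Real.norm_of_nonneg (by positivity)]
          exact (hG_bounds x hx).2
        · rw [Real.norm_of_nonneg (hG_nonneg x), Real.norm_of_nonneg (by positivity),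
            ← div_eq_inv_mul, le_div_iff₀' (by positivity)]
          exact (hG_bounds x hx).1
    _ ↔ (ε - 1) * q < -2 := (integrableOn_setOf_lt_norm_rpow_iff _ one_pos).trans (by simp)
    _ ↔ 2 / (1 - ε) < q := by
        rw [div_lt_iff₀ (by linarith)]
        constructor <;> intro h <;> linarith

theorem abs_div_sqrt_four_add_sq_pos {ξ : ℝ} (hξ : ξ ≠ 0) : 0 < |ξ| / Real.sqrt (4 + ξ ^ 2) := by
  positivity

theorem abs_div_sqrt_four_add_sq_lt_one (ξ : ℝ) : |ξ| / Real.sqrt (4 + ξ ^ 2) < 1 := by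
  rw [div_lt_one (by positivity), ← Real.sqrt_sq_eq_abs]
  exact Real.sqrt_lt_sqrt (sq_nonneg ξ) (by linarith)

/-- De Giorgi-type counter-example, sharp integrability: `u` vanishes on the
unit circle, and `∇u ∈ L^q` outside the unit disk iff `q > 2/(1-ε)`; in
particular `∇u ∉ L²` there. -/
theorem deGiorgi_sharp_integrability (ξ : ℝ) (hξ : ξ ≠ 0) :
    (∀ x : V2, ‖x‖ = 1 → deGiorgiField ξ x = 0) ∧
    (∀ q : ℝ, 1 < q →
      ((∫⁻ x in {x : V2 | 1 < ‖x‖},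
          ENNReal.ofReal (frobNorm (grad (deGiorgiField ξ) x) ^ q)) < ⊤ ↔
        2 / (1 - |ξ| / Real.sqrt (4 + ξ ^ 2)) < q)) ∧
    ¬ (∫⁻ x in {x : V2 | 1 < ‖x‖},
        ENNReal.ofReal (frobNorm (grad (deGiorgiField ξ) x) ^ (2 : ℝ))) < ⊤ := by
  have hε0 := abs_div_sqrt_four_add_sq_pos hξ
  have hε1 := abs_div_sqrt_four_add_sq_lt_one ξ
  have key (q : ℝ) (hq : 0 < q) := lintegral_frobNorm_grad_deGiorgi_lt_top_iff hε0 hε1 hq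
  refine ⟨fun x hx => by simp [deGiorgiField, hx], ?_⟩
  rw [deGiorgiField_eq_smul]
  refine ⟨fun q hq => key q (by linarith), ?_⟩
  rw [key 2 two_pos, div_lt_iff₀ (by linarith)]
  linarith
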